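/- The Lobachevsky function satisfies the identity Λ(2x) = 2Λ(x) + 2Λ(x + π/2) for all real x. -/
import Mathlib


open Real MeasureTheory intervalIntegral

/-- The Lobachevsky function `Λ(x) = -∫₀ˣ log |2 sin t| dt`. -/
noncomputable def lob (x : ℝ) : ℝ := -∫ t in (0 : ℝ)..x, Real.log |2 * Real.sin t|

section Aux
open Set

private noncomputable def g (t : ℝ) : ℝ := Real.log |2 * Real.sin t|

/-- log is integrable on (0, c]. -/
lemma integrableOn_log_Ioc {c : ℝ} (hc : 0 ≤ c) :
    IntegrableOn (fun t : ℝ => Real.log t) (Set.Ioc 0 c) volume := by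
  have hdom : IntegrableOn (fun t : ℝ => 2 * t ^ (-(1:ℝ)/2) + t) (Set.Ioc 0 c) volume := by
    have h1 : IntervalIntegrable (fun t : ℝ => t ^ (-(1:ℝ)/2)) volume 0 c :=
      intervalIntegral.intervalIntegrable_rpow' (by norm_num)
    have h2 : IntervalIntegrable (fun t : ℝ => t) volume 0 c :=
      continuous_id.intervalIntegrable 0 c
    have h3 := (h1.const_mul 2).add h2
    rwa [intervalIntegrable_iff_integrableOn_Ioc_of_le hc] at h3
  refine hdom.integrable.mono Real.measurable_log.aestronglyMeasurable ?_
  rw [ae_restrict_iff' measurableSet_Ioc]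
  filter_upwards with t ht
  have ht0 : 0 < t := ht.1
  have hrp : (0:ℝ) < t ^ (-(1:ℝ)/2) := Real.rpow_pos_of_pos ht0 _
  have key : |Real.log t| ≤ 2 * t ^ (-(1:ℝ)/2) + t := by
    have hlog : Real.log (t ^ (-(1:ℝ)/2)) ≤ t ^ (-(1:ℝ)/2) - 1 :=
      Real.log_le_sub_one_of_pos hrp
    rw [Real.log_rpow ht0] at hlog
    rcases le_or_gt t 1 with h1 | h1
    · rw [abs_of_nonpos (Real.log_nonpos ht0.le h1)]
      nlinarith
    · rw [abs_of_pos (Real.log_pos h1)]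
      have := Real.log_le_sub_one_of_pos ht0
      nlinarith
  calc ‖Real.log t‖ = |Real.log t| := rfl
    _ ≤ 2 * t ^ (-(1:ℝ)/2) + t := key
    _ ≤ ‖2 * t ^ (-(1:ℝ)/2) + t‖ := le_abs_self _

lemma intervalIntegrable_log_abs (a b : ℝ) :
    IntervalIntegrable (fun t : ℝ => Real.log |t|) volume a b := by
  have H : ∀ c : ℝ, 0 ≤ c → IntervalIntegrable (fun t : ℝ => Real.log |t|) volume 0 c := by
    intro c hc
    rw [intervalIntegrable_iff_integrableOn_Ioc_of_le hc]
    exact (integrableOn_log_Ioc hc).congr_fun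
      (fun t ht => by rw [abs_of_pos ht.1]) measurableSet_Ioc
  have key : ∀ c : ℝ, IntervalIntegrable (fun t : ℝ => Real.log |t|) volume 0 c := by
    intro c
    rcases le_total 0 c with hc | hc
    · exact H c hc
    · have h2 := (IntervalIntegrable.iff_comp_neg).mp (H (-c) (by linarith))
      simpa using h2
  exact (key a).symm.trans (key b)

lemma g_block (k : ℤ) :
    IntervalIntegrable g volume ((k : ℝ) * π - π / 2) ((k : ℝ) * π + π / 2) := by
  have hdom : IntervalIntegrable
      (fun t : ℝ => (Real.log 2 + Real.log (π/2)) + |Real.log (abs (t - (k : ℝ) * π))|) volume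
      ((k : ℝ) * π - π / 2) ((k : ℝ) * π + π / 2) := by
    have h1 := (intervalIntegrable_log_abs (-(π/2)) (π/2)).comp_sub_right ((k : ℝ) * π)
    have h2 : IntervalIntegrable (fun t : ℝ => |Real.log (abs (t - (k : ℝ) * π))|) volume
        ((k : ℝ) * π - π / 2) ((k : ℝ) * π + π / 2) := by
      have := h1.norm
      simpa [neg_add_eq_sub, sub_eq_neg_add, add_comm] using this
    simpa using (_root_.intervalIntegrable_const (c := Real.log 2 + Real.log (π/2)) (μ := volume)).add h2
  rw [intervalIntegrable_iff] at hdom ⊢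
  refine hdom.mono' (Real.measurable_log.comp (measurable_const.mul Real.measurable_sin).abs).aestronglyMeasurable ?_
  rw [ae_restrict_iff' measurableSet_uIoc]
  filter_upwards with t ht
  have htIcc : t ∈ Set.uIcc ((k : ℝ) * π - π / 2) ((k : ℝ) * π + π / 2) := Set.uIoc_subset_uIcc ht
  rw [Set.uIcc_of_le (by linarith [pi_pos])] at htIcc
  set u : ℝ := t - (k : ℝ) * π with hu
  have hu1 : |u| ≤ π / 2 := by
    rw [abs_le]; constructor <;> [linarith [htIcc.1]; linarith [htIcc.2]]
  have hsin : |Real.sin t| = |Real.sin u| := by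
    have : Real.sin t = Real.sin (u + (k : ℝ) * π) := by rw [hu]; ring_nf
    rw [this, Real.sin_add, Real.sin_int_mul_pi, mul_zero, add_zero, abs_mul,
      Real.abs_cos_int_mul_pi, mul_one]
  have hl2 : (0:ℝ) ≤ Real.log 2 := Real.log_nonneg one_le_two
  have hlp : (0:ℝ) ≤ Real.log (π/2) := Real.log_nonneg (by linarith [pi_gt_three])
  have hgabs : |g t| ≤ (Real.log 2 + Real.log (π/2)) + |Real.log (abs u)| := by
    have hgt : g t = Real.log (2 * |Real.sin u|) := by
      rw [g, abs_mul, hsin]; norm_num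
    rcases eq_or_ne u 0 with h0 | h0
    · rw [hgt, h0]; simp
      positivity
    · have habs : (0:ℝ) < |u| := abs_pos.mpr h0
      have hsu : (0:ℝ) < |Real.sin u| := by
        have := Real.mul_abs_le_abs_sin hu1
        have : (0:ℝ) < 2 / π * |u| := by positivity
        linarith [Real.mul_abs_le_abs_sin hu1]
      have hub : g t ≤ Real.log 2 + Real.log |u| := by
        rw [hgt]
        calc Real.log (2 * |Real.sin u|) ≤ Real.log (2 * |u|) := by
              apply Real.log_le_log (by positivity)
              nlinarith [Real.abs_sin_le_abs (x := u)]
          _ = Real.log 2 + Real.log |u| := Real.log_mul two_ne_zero habs.ne'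
      have hlb : Real.log 2 - Real.log (π/2) + Real.log |u| ≤ g t := by
        have h1 : Real.log (2 * (2/π * |u|)) ≤ g t := by
          rw [hgt]
          apply Real.log_le_log (by positivity)
          nlinarith [Real.mul_abs_le_abs_sin hu1]
        have h2 : Real.log (2 * (2/π * |u|)) = Real.log 2 - Real.log (π/2) + Real.log |u| := by
          rw [Real.log_mul two_ne_zero (by positivity), Real.log_mul (by positivity) habs.ne',
            Real.log_div two_ne_zero (by positivity : (π:ℝ) ≠ 0), Real.log_div (by positivity : (π:ℝ) ≠ 0) two_ne_zero]
          ring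
        linarith
      rw [abs_le]
      constructor
      · have := neg_abs_le (Real.log |u|); linarith
      · have := le_abs_self (Real.log |u|); linarith
  exact hgabs

lemma g_half (k : ℤ) :
    IntervalIntegrable g volume ((k : ℝ) * (π / 2)) (((k : ℝ) + 1) * (π / 2)) := by
  rcases Int.even_or_odd k with ⟨m, hm⟩ | ⟨m, hm⟩
  · refine (g_block m).mono_set (Set.uIcc_subset_uIcc ?_ ?_) <;>
    · subst hm
      push_cast
      rw [Set.uIcc_of_le (by linarith [pi_pos]), Set.mem_Icc]
      constructor <;> nlinarith [pi_pos]
  · refine (g_block (m + 1)).mono_set (Set.uIcc_subset_uIcc ?_ ?_) <;>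
    · subst hm
      push_cast
      rw [Set.uIcc_of_le (by linarith [pi_pos]), Set.mem_Icc]
      constructor <;> nlinarith [pi_pos]

lemma g_grid : ∀ (n : ℕ) (k : ℤ),
    IntervalIntegrable g volume ((k : ℝ) * (π / 2)) (((k : ℝ) + n) * (π / 2)) := by
  intro n
  induction n with
  | zero => intro k; simpa using IntervalIntegrable.refl (f := g) (μ := volume)
  | succ n ih =>
    intro k
    have h1 := ih k
    have h2 := g_half (k + n)
    push_cast at h2
    have := h1.trans (by convert h2 using 2 <;> ring)
    convert this using 2
    push_cast
    ring

lemma g_grid' (k l : ℤ) :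
    IntervalIntegrable g volume ((k : ℝ) * (π / 2)) ((l : ℝ) * (π / 2)) := by
  rcases le_total k l with h | h
  · have := g_grid (l - k).toNat k
    rw [show (((l - k).toNat : ℕ) : ℝ) = (l : ℝ) - k by
      rw [← Int.cast_natCast, Int.toNat_of_nonneg (by omega : (0:ℤ) ≤ l - k)]; push_cast; ring] at this
    rwa [add_sub_cancel] at this
  · have := g_grid (k - l).toNat l
    rw [show (((k - l).toNat : ℕ) : ℝ) = (k : ℝ) - l by
      rw [← Int.cast_natCast, Int.toNat_of_nonneg (by omega : (0:ℤ) ≤ k - l)]; push_cast; ring] at this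
    rw [add_sub_cancel] at this
    exact this.symm

lemma g_intervalIntegrable (a b : ℝ) : IntervalIntegrable g volume a b := by
  have hπ : (0:ℝ) < π / 2 := by linarith [pi_pos]
  have key : ∀ c : ℝ, ∃ k : ℤ, (k : ℝ) * (π / 2) ≤ c ∧ c ≤ ((k : ℝ) + 1) * (π / 2) := by
    intro c
    refine ⟨⌊c / (π / 2)⌋, ?_, ?_⟩
    · rw [← le_div_iff₀ hπ]; exact Int.floor_le _
    · rw [← div_le_iff₀ hπ]; exact (Int.lt_floor_add_one _).le
  obtain ⟨k, hk1, hk2⟩ := key a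
  obtain ⟨l, hl1, hl2⟩ := key b
  have h1 : IntervalIntegrable g volume a (((k : ℝ) + 1) * (π / 2)) :=
    (g_half k).mono_set (Set.uIcc_subset_uIcc
      (by rw [Set.uIcc_of_le (by linarith), Set.mem_Icc]; exact ⟨hk1, hk2⟩)
      (by rw [Set.uIcc_of_le (by linarith), Set.mem_Icc]; constructor <;> linarith))
  have h2 : IntervalIntegrable g volume (((k : ℝ) + 1) * (π / 2)) ((l : ℝ) * (π / 2)) := by
    have := g_grid' (k + 1) l
    push_cast at this
    exact this
  have h3 : IntervalIntegrable g volume ((l : ℝ) * (π / 2)) b :=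
    (g_half l).mono_set (Set.uIcc_subset_uIcc
      (by rw [Set.uIcc_of_le (by linarith), Set.mem_Icc]; constructor <;> linarith)
      (by rw [Set.uIcc_of_le (by linarith), Set.mem_Icc]; exact ⟨hl1, hl2⟩))
  exact (h1.trans h2).trans h3

lemma lob_def (x : ℝ) : lob x = -∫ t in (0:ℝ)..x, g t := rfl

lemma lob_neg (x : ℝ) : lob (-x) = -lob x := by
  rw [lob_def, lob_def, neg_inj]
  have h1 : ∫ t in (0:ℝ)..x, g (-t) = ∫ t in (-x)..(0:ℝ), g t := by
    simpa using intervalIntegral.integral_comp_neg (a := (0:ℝ)) (b := x) (f := g)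
  have h2 : ∀ t : ℝ, g (-t) = g t := by
    intro t; simp [g, Real.sin_neg, abs_mul]
  simp_rw [h2] at h1
  rw [intervalIntegral.integral_symm]
  rw [← h1]

lemma lob_dup (x : ℝ) :
    lob (2 * x) = 2 * lob x + 2 * lob (x + π / 2) - 2 * lob (π / 2) := by
  have hae : ∀ᵐ u : ℝ, u ∈ Set.uIoc (0:ℝ) x → g (2 * u) = g u + g (u + π / 2) := by
    have hS : (({u : ℝ | Real.sin u = 0} ∪ {u : ℝ | Real.cos u = 0}) : Set ℝ).Countable := by
      apply Set.Countable.union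
      · have : {u : ℝ | Real.sin u = 0} ⊆ Set.range (fun n : ℤ => (n : ℝ) * π) := by
          intro u hu
          obtain ⟨n, hn⟩ := Real.sin_eq_zero_iff.mp hu
          exact ⟨n, hn⟩
        exact (Set.countable_range _).mono this
      · have : {u : ℝ | Real.cos u = 0} ⊆ Set.range (fun n : ℤ => (2 * (n:ℝ) + 1) * π / 2) := by
          intro u hu
          obtain ⟨n, hn⟩ := Real.cos_eq_zero_iff.mp hu
          exact ⟨n, hn.symm⟩
        exact (Set.countable_range _).mono this
    have hS0 := hS.measure_zero (μ := volume)
    rw [← compl_compl ({u : ℝ | Real.sin u = 0} ∪ {u : ℝ | Real.cos u = 0})] at hS0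
    have := (measure_eq_zero_iff_ae_notMem (μ := volume)
      (s := ({u : ℝ | Real.sin u = 0} ∪ {u : ℝ | Real.cos u = 0}))).mp (hS.measure_zero _)
    filter_upwards [this] with u hu _
    simp only [Set.mem_union, Set.mem_setOf_eq, not_or] at hu
    obtain ⟨hsin, hcos⟩ := hu
    have key : (2:ℝ) * Real.sin (2 * u) = (2 * Real.sin u) * (2 * Real.cos u) := by
      rw [Real.sin_two_mul]; ring
    rw [g, g, g, key, abs_mul, Real.log_mul, Real.sin_add_pi_div_two]
    · simp [abs_ne_zero, hsin]
    · simp [abs_ne_zero, hcos]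
  have hsub : ∫ t in (0:ℝ)..(2*x), g t = 2 * ∫ u in (0:ℝ)..x, g (2 * u) := by
    have := intervalIntegral.integral_comp_mul_left (a := (0:ℝ)) (b := x) (c := (2:ℝ)) g
      two_ne_zero
    rw [mul_zero] at this
    rw [this]
    simp
  have hcongr : ∫ u in (0:ℝ)..x, g (2 * u) = ∫ u in (0:ℝ)..x, (g u + g (u + π / 2)) :=
    intervalIntegral.integral_congr_ae hae
  have hint2 : IntervalIntegrable (fun u : ℝ => g (u + π / 2)) volume 0 x := by
    have := (g_intervalIntegrable (π/2) (x + π/2)).comp_add_right (π/2)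
    simpa using this
  have hadd : ∫ u in (0:ℝ)..x, (g u + g (u + π / 2)) =
      (∫ u in (0:ℝ)..x, g u) + ∫ u in (0:ℝ)..x, g (u + π / 2) :=
    intervalIntegral.integral_add (g_intervalIntegrable 0 x) hint2
  have hshift : ∫ u in (0:ℝ)..x, g (u + π / 2) = ∫ t in (π/2)..(x + π/2), g t := by
    have := intervalIntegral.integral_comp_add_right (a := (0:ℝ)) (b := x) g (π/2)
    rw [this, zero_add]
  have hsplit : ∫ t in (π/2)..(x + π/2), g t =
      (∫ t in (0:ℝ)..(x + π/2), g t) - ∫ t in (0:ℝ)..(π/2), g t := by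
    rw [eq_sub_iff_add_eq, add_comm]
    exact intervalIntegral.integral_add_adjacent_intervals
      (g_intervalIntegrable 0 (π/2)) (g_intervalIntegrable (π/2) (x + π/2))
  simp only [lob_def]
  rw [hsub, hcongr, hadd, hshift, hsplit]
  ring

/-- The Lobachevsky function satisfies the duplication identity
`Λ(2x) = 2Λ(x) + 2Λ(x + π/2)` for all real `x`. -/
theorem lobachevsky_duplication (x : ℝ) :
    lob (2 * x) = 2 * lob x + 2 * lob (x + π / 2) := by
  have hzero : lob (π / 2) = 0 := by
    have h := lob_dup (-(π/4))
    have e1 : 2 * (-(π/4)) = -(π/2) := by ring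
    have e2 : -(π/4) + π/2 = π/4 := by ring
    rw [e1, e2, lob_neg, lob_neg] at h
    linarith
  rw [lob_dup, hzero]
  ring

end Aux
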